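/- arXiv:2101.08902 — 6 statements merged into one kernel-verified Lean document; each statement's English description precedes it below -/
import Mathlib

section
/- Let G = ℤ² ⋊_A ℤ where A ∈ SL₂(ℤ) acts on ℤ² by the generator t of ℤ, i.e., t·v·t⁻¹ = Av for v ∈ ℤ². If |tr(A)| > 2, then any length function l : G → [0,∞) vanishes on the subgroup ℤ². -/
/-!
Conjugation by `t` realises `A` on `ι(ℤ²)`, so `l ∘ ι` is invariant under `A` and `A⁻¹`.
By Cayley–Hamilton in dimension two, `A v + A⁻¹ v = tr(A) v`, and the two summands commute in
`G`, so `|tr A| · l(ι v) = l(ι(A v) · ι(A⁻¹ v)) ≤ 2 · l(ι v)`. Since `|tr A| > 2` and `l ≥ 0`,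
this forces `l(ι v) = 0`.
-/

namespace Matrix

open MatrixGroups

theorem add_adjugate_fin_two {R : Type*} [CommRing R] (M : Matrix (Fin 2) (Fin 2) R) :
    M + adjugate M = trace M • (1 : Matrix (Fin 2) (Fin 2) R) := by
  ext i j
  fin_cases i <;> fin_cases j <;> simp [adjugate_fin_two, trace_fin_two]; ring

theorem SpecialLinearGroup.mulVec_add_inv_mulVec_fin_two {R : Type*} [CommRing R]
    (A : SL(2, R)) (v : Fin 2 → R) :
    (A : Matrix (Fin 2) (Fin 2) R) *ᵥ v + (A⁻¹ : SL(2, R)) *ᵥ v =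
      trace (A : Matrix (Fin 2) (Fin 2) R) • v := by
  rw [coe_inv, ← add_mulVec, add_adjugate_fin_two, smul_mulVec, one_mulVec]

end Matrix

theorem map_zsmul_of_map_add {M G : Type*} [AddGroup M] [Group G] {ι : M → G}
    (hι : ∀ v w, ι (v + w) = ι v * ι w) (n : ℤ) (v : M) : ι (n • v) = ι v ^ n :=
  map_zpow (MonoidHom.mk' (fun x : Multiplicative M => ι x.toAdd) hι) (.ofAdd v) n

theorem length_eq_zero_of_zpow_eq_mul_of_isConj {G : Type*} [Group G] {l : G → ℝ}
    (hpow : ∀ (g : G) (n : ℤ), l (g ^ n) = |(n : ℝ)| * l g)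
    (hconj : ∀ a g : G, l (a * g * a⁻¹) = l g)
    (hcomm : ∀ a b : G, a * b = b * a → l (a * b) ≤ l a + l b)
    {g a b : G} (hg : 0 ≤ l g) {n : ℤ} (hn : 2 < |n|) (hab : a * b = b * a)
    (ha : IsConj g a) (hb : IsConj g b) (h : g ^ n = a * b) : l g = 0 := by
  have hla : l a = l g := by obtain ⟨c, rfl⟩ := isConj_iff.mp ha; exact hconj c g
  have hlb : l b = l g := by obtain ⟨c, rfl⟩ := isConj_iff.mp hb; exact hconj c g
  have hn' : (2 : ℝ) < |(n : ℝ)| := by exact_mod_cast hn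
  have hle : |(n : ℝ)| * l g ≤ 2 * l g := calc
    |(n : ℝ)| * l g = l (a * b) := by rw [← hpow, h]
    _ ≤ l a + l b := hcomm a b hab
    _ = 2 * l g := by rw [hla, hlb, two_mul]
  nlinarith

theorem length_function_vanishes_on_Z2_of_trace_gt_two_general
    {G : Type*} [Group G] (A : Matrix.SpecialLinearGroup (Fin 2) ℤ)
    (htr : 2 < |Matrix.trace (A : Matrix (Fin 2) (Fin 2) ℤ)|)
    (ι : (Fin 2 → ℤ) → G) (hι : ∀ v w : Fin 2 → ℤ, ι (v + w) = ι v * ι w)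
    (t : G) (ht : ∀ v : Fin 2 → ℤ, t * ι v * t⁻¹ = ι ((A : Matrix (Fin 2) (Fin 2) ℤ).mulVec v))
    (l : G → ℝ)
    (hnonneg : ∀ g : G, 0 ≤ l g)
    (hpow : ∀ (g : G) (n : ℤ), l (g ^ n) = |(n : ℝ)| * l g)
    (hconj : ∀ a g : G, l (a * g * a⁻¹) = l g)
    (hcomm : ∀ a b : G, a * b = b * a → l (a * b) ≤ l a + l b) :
    ∀ v : Fin 2 → ℤ, l (ι v) = 0 := by
  intro v
  open Matrix MatrixGroups in
  have hAv : IsConj (ι v) (ι (A *ᵥ v)) := isConj_iff.mpr ⟨t, ht v⟩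
  open Matrix MatrixGroups in
  have hA'v : IsConj (ι v) (ι ((A⁻¹ : SL(2, ℤ)) *ᵥ v)) := by
    have hAA' : (A : Matrix (Fin 2) (Fin 2) ℤ) * (A⁻¹ : SL(2, ℤ)) = 1 :=
      congrArg Subtype.val (mul_inv_cancel A)
    refine (isConj_iff.mpr ⟨t, ?_⟩).symm
    rw [ht, mulVec_mulVec, hAA', one_mulVec]
  refine length_eq_zero_of_zpow_eq_mul_of_isConj hpow hconj hcomm (hnonneg _) htr
    (by rw [← hι, ← hι, add_comm]) hAv hA'v ?_
  rw [← map_zsmul_of_map_add hι, ← Matrix.SpecialLinearGroup.mulVec_add_inv_mulVec_fin_two, hι]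

/-- In the semidirect product `ℤ² ⋊_A ℤ` with `A ∈ SL₂(ℤ)` and `|tr A| > 2`, any
length function vanishes on the subgroup `ℤ²`.  The semidirect product is encoded
by an injective additive-to-multiplicative map `ι : ℤ² → G` and an element `t`
(the generator of `ℤ`) with `t * ι v * t⁻¹ = ι (A v)`. -/
theorem length_function_vanishes_on_Z2_of_trace_gt_two
    {G : Type*} [Group G] (A : Matrix.SpecialLinearGroup (Fin 2) ℤ)
    (htr : 2 < |Matrix.trace (A : Matrix (Fin 2) (Fin 2) ℤ)|)
    (ι : (Fin 2 → ℤ) → G) (hι : ∀ v w : Fin 2 → ℤ, ι (v + w) = ι v * ι w)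
    (hinj : Function.Injective ι)
    (t : G) (ht : ∀ v : Fin 2 → ℤ, t * ι v * t⁻¹ = ι ((A : Matrix (Fin 2) (Fin 2) ℤ).mulVec v))
    (l : G → ℝ)
    (hnonneg : ∀ g : G, 0 ≤ l g)
    (hpow : ∀ (g : G) (n : ℤ), l (g ^ n) = |(n : ℝ)| * l g)
    (hconj : ∀ a g : G, l (a * g * a⁻¹) = l g)
    (hcomm : ∀ a b : G, a * b = b * a → l (a * b) ≤ l a + l b) :
    ∀ v : Fin 2 → ℤ, l (ι v) = 0 :=
  length_function_vanishes_on_Z2_of_trace_gt_two_general A htr ι hι t ht l hnonneg hpow hconj hcomm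
end

section
/- Let H be the integral Heisenberg group ⟨a, b, c | aba⁻¹b⁻¹ = c, ac = ca, bc = cb⟩ and f : H → ℝ a conjugation-invariant function (f(xgx⁻¹) = f(g) for all x, g). Then for any coprime integers m, n (not both zero) and any integer k, f(a^m b^n c^k) = f(a^m b^n). -/
/-!
Conjugating `a^m b^n` by `a^t b^(-s)` multiplies it by the central element `c^(ms + nt)`,
because `⁅x^p, y^q⁆ = ⁅x, y⁆^(pq)` whenever `⁅x, y⁆` commutes with `x` and `y`. For coprime `m, n`
every integer `k` has the form `ms + nt`, so `a^m b^n c^k` is conjugate to `a^m b^n`.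
-/

open scoped commutatorElement

theorem commutatorElement_zpow_zpow {G : Type*} [Group G] {x y : G}
    (hx : Commute x ⁅x, y⁆) (hy : Commute y ⁅x, y⁆) (p q : ℤ) :
    ⁅x ^ p, y ^ q⁆ = ⁅x, y⁆ ^ (p * q) := by
  set z := ⁅x, y⁆ with hz
  -- Conjugating `x` by `y⁻¹` rather than `y` by `x` lets `zpow_right` raise `x` to powers without induction.
  have hyx : SemiconjBy y⁻¹ x (z * x) :=
    calc y⁻¹ * x = y⁻¹ * (z * y) * x * y⁻¹ := by rw [hz, commutatorElement_def]; group
      _ = z * x * y⁻¹ := by rw [← hy.eq]; group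
  have hxpy : SemiconjBy (x ^ p) y (y * z ^ p) := by
    have h := (hyx.zpow_right p).eq
    rw [hx.symm.mul_zpow] at h
    calc x ^ p * y = y * (y⁻¹ * x ^ p) * y := by group
      _ = y * z ^ p * x ^ p := by rw [h]; group
  have hxpyq := (hxpy.zpow_right q).eq
  rw [(hy.zpow_right p).mul_zpow, ← zpow_mul] at hxpyq
  rw [commutatorElement_def, hxpyq, mul_inv_cancel_right, (hy.zpow_zpow q (p * q)).eq,
    mul_inv_cancel_right]

theorem zpow_mul_zpow_conj_of_commutatorElement_eq {H : Type*} [Group H] {a b c : H}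
    (hc : ⁅a, b⁆ = c) (hac : Commute a c) (hbc : Commute b c) (m n s t : ℤ) :
    a ^ t * b ^ (-s) * (a ^ m * b ^ n) * (a ^ t * b ^ (-s))⁻¹ =
      a ^ m * b ^ n * c ^ (m * s + n * t) := by
  have hba : ⁅b, a⁆ = c⁻¹ := by rw [← commutatorElement_inv, hc]
  have hconj_a : b ^ (-s) * a ^ m * (b ^ (-s))⁻¹ = a ^ m * c ^ (m * s) := by
    have h := commutatorElement_zpow_zpow (hba ▸ hbc.inv_right) (hba ▸ hac.inv_right) (-s) m
    rw [commutatorElement_def, hba, mul_inv_eq_iff_eq_mul] at h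
    rw [h, inv_zpow', neg_mul, neg_neg, mul_comm s m, (hac.zpow_zpow m (m * s)).eq]
  have hconj_b : a ^ t * b ^ n * (a ^ t)⁻¹ = b ^ n * c ^ (n * t) := by
    have h := commutatorElement_zpow_zpow (hc ▸ hac) (hc ▸ hbc) t n
    rw [commutatorElement_def, hc, mul_inv_eq_iff_eq_mul] at h
    rw [h, mul_comm t n, (hbc.zpow_zpow n (n * t)).eq]
  calc a ^ t * b ^ (-s) * (a ^ m * b ^ n) * (a ^ t * b ^ (-s))⁻¹
      = a ^ t * ((b ^ (-s) * a ^ m * (b ^ (-s))⁻¹) * b ^ n) * (a ^ t)⁻¹ := by group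
    _ = a ^ m * (a ^ t * b ^ n * (a ^ t)⁻¹) * c ^ (m * s) := by
        rw [hconj_a]
        simp only [mul_assoc]
        rw [((Commute.refl a).zpow_zpow t m).left_comm, (hbc.zpow_zpow n (m * s)).symm.left_comm,
          (hac.zpow_zpow t (m * s)).inv_left.symm.eq]
    _ = a ^ m * b ^ n * c ^ (m * s + n * t) := by
        rw [hconj_b, add_comm, zpow_add]; group

/-- In the Heisenberg group (generators `a, b` with `⁅a,b⁆ = c` central among them),
any conjugation-invariant function `f` satisfies `f (a^m b^n c^k) = f (a^m b^n)`
for coprime integers `m, n` and any integer `k`. -/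
theorem heisenberg_conj_invariant_function {H : Type*} [Group H] (a b c : H)
    (hab : a * b * a⁻¹ * b⁻¹ = c) (hac : a * c = c * a) (hbc : b * c = c * b)
    (f : H → ℝ) (hconj : ∀ x g : H, f (x * g * x⁻¹) = f g)
    (m n : ℤ) (hmn : IsCoprime m n) (k : ℤ) :
    f (a ^ m * b ^ n * c ^ k) = f (a ^ m * b ^ n) := by
  obtain ⟨u, v, huv⟩ := hmn
  have hk : m * (u * k) + n * (v * k) = k := by linear_combination k * huv
  rw [← hk, ← zpow_mul_zpow_conj_of_commutatorElement_eq hab hac hbc, hconj]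
end

section
/- Let H be the integral Heisenberg group with generators a, b and central element c = [a,b]. Then any length function l : H → [0,∞) satisfies l(c) = 0, and consequently l factors through the abelianization H/[H,H] ≅ ℤ². -/
/-!
Conjugating `ab` by `a` multiplies it by the central element `c`, so `a^n (ab) a^{-n} = ab · c^n`
and hence `l (ab · c^n) = l (ab)` for every `n`. Since `ab` and `c^n` commute, subadditivity gives
`n · l c = l (c^n) ≤ l ((ab)⁻¹) + l (ab · c^n) = 2 l (ab)`, which forces `l c = 0`.
Modulo `⟨c⟩` the generators commute, so the commutator subgroup lies in `⟨c⟩`, on whose cosets `l`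
is constant.
-/

open Subgroup

namespace Subgroup

variable {G : Type*} [Group G]

theorem mem_center_of_closure_eq_top {s : Set G} (hs : closure s = ⊤) {g : G}
    (h : ∀ x ∈ s, Commute x g) : g ∈ center G := by
  rw [← centralizer_univ, ← coe_top, ← hs, centralizer_closure]
  exact mem_centralizer_iff.mpr h

theorem isMulCommutative_of_closure_eq_top {s : Set G} (hs : closure s = ⊤)
    (hcomm : ∀ x ∈ s, ∀ y ∈ s, x * y = y * x) : IsMulCommutative G := by
  have hmem (x : G) : x ∈ centralizer (centralizer s) :=
    closure_le_centralizer_centralizer s (hs ▸ mem_top x)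
  exact ⟨⟨fun x y => Set.centralizer_centralizer_comm_of_comm hcomm x (hmem x) y (hmem y)⟩⟩

theorem normal_of_le_center {N : Subgroup G} (hN : N ≤ center G) : N.Normal :=
  ⟨fun n hn g => by rwa [mem_center_iff.mp (hN hn) g, mul_inv_cancel_right]⟩

end Subgroup

theorem commutator_le_of_closure_pair_eq_top {G : Type*} [Group G] {a b : G}
    (hgen : closure {a, b} = ⊤) {N : Subgroup G} [N.Normal] (hab : a * b * a⁻¹ * b⁻¹ ∈ N) :
    commutator G ≤ N := by
  rw [← Subgroup.Normal.quotient_commutative_iff_commutator_le]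
  have hgen' : closure {(a : G ⧸ N), (b : G ⧸ N)} = ⊤ := by
    change closure {QuotientGroup.mk' N a, QuotientGroup.mk' N b} = ⊤
    rw [← Set.image_pair, ← MonoidHom.map_closure, hgen, ← MonoidHom.range_eq_map,
      MonoidHom.range_eq_top]
    exact QuotientGroup.mk'_surjective N
  have hab' : (a : G ⧸ N) * b = b * a := by
    rw [← mul_inv_eq_one, ← QuotientGroup.mk_mul, ← QuotientGroup.mk_mul, ← QuotientGroup.mk_inv,
      ← QuotientGroup.mk_mul, QuotientGroup.eq_one_iff, mul_inv_rev, ← mul_assoc]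
    exact hab
  refine isMulCommutative_of_closure_eq_top hgen' ?_
  rintro x (rfl | rfl) y (rfl | rfl) <;> first | rfl | exact hab' | exact hab'.symm

structure IsLengthFunction {G : Type*} [Group G] (l : G → ℝ) : Prop where
  map_zpow : ∀ (g : G) (n : ℤ), l (g ^ n) = |(n : ℝ)| * l g
  map_conj : ∀ x g : G, l (x * g * x⁻¹) = l g
  map_mul_le_of_commute : ∀ x y : G, Commute x y → l (x * y) ≤ l x + l y

namespace IsLengthFunction

variable {G : Type*} [Group G] {l : G → ℝ} (hl : IsLengthFunction l)
include hl

theorem map_one : l 1 = 0 := by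
  simpa using hl.map_zpow 1 0

theorem map_inv (g : G) : l g⁻¹ = l g := by
  simpa using hl.map_zpow g (-1)

theorem map_pow (g : G) (n : ℕ) : l (g ^ n) = n * l g := by
  simpa using hl.map_zpow g n

theorem nonneg (g : G) : 0 ≤ l g := by
  have h := hl.map_mul_le_of_commute g g⁻¹ (Commute.inv_right (Commute.refl g))
  rw [mul_inv_cancel, hl.map_one, hl.map_inv] at h
  linarith

theorem map_mul_of_commute_of_eq_zero {x y : G} (hxy : Commute x y) (hy : l y = 0) :
    l (x * y) = l x := by
  refine le_antisymm (by linarith [hl.map_mul_le_of_commute x y hxy]) ?_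
  calc l x = l (x * y * y⁻¹) := by rw [mul_inv_cancel_right]
    _ ≤ l (x * y) + l y⁻¹ := hl.map_mul_le_of_commute _ _ (hxy.mul_left (.refl y)).inv_right
    _ = l (x * y) := by rw [hl.map_inv, hy, add_zero]

theorem eq_zero_of_conj_eq_mul {g x y : G} (hconj : g * x * g⁻¹ = x * y) (hxy : Commute x y)
    (hgy : Commute g y) : l y = 0 := by
  have hconj_pow : ∀ n : ℕ, g ^ n * x * (g ^ n)⁻¹ = x * y ^ n := by
    intro n
    induction n with
    | zero => simp
    | succ n ih =>
      calc g ^ (n + 1) * x * (g ^ (n + 1))⁻¹ = g * (g ^ n * x * (g ^ n)⁻¹) * g⁻¹ := by group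
        _ = g * x * g⁻¹ * y ^ n := by simp only [ih, mul_assoc, ← (hgy.pow_right n).inv_left.eq]
        _ = x * y ^ (n + 1) := by rw [hconj, pow_succ']; group
  have hbound : ∀ n : ℕ, n * l y ≤ 2 * l x := by
    intro n
    calc n * l y = l (x⁻¹ * (x * y ^ n)) := by rw [inv_mul_cancel_left, hl.map_pow]
      _ ≤ l x⁻¹ + l (x * y ^ n) :=
        hl.map_mul_le_of_commute _ _ ((Commute.refl x).mul_right (hxy.pow_right n)).inv_left
      _ = 2 * l x := by rw [hl.map_inv, ← hconj_pow, hl.map_conj]; ring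
  refine le_antisymm ?_ (hl.nonneg y)
  by_contra! hpos
  obtain ⟨n, hn⟩ := exists_nat_gt (2 * l x / l y)
  rw [div_lt_iff₀ hpos] at hn
  linarith [hbound n]

theorem exists_factor_abelianization (hcenter : commutator G ≤ center G)
    (hzero : ∀ g ∈ commutator G, l g = 0) :
    ∃ l' : Abelianization G → ℝ, ∀ g : G, l' (Abelianization.of g) = l g := by
  refine ⟨Quotient.lift l fun g h hgh => ?_, fun g => rfl⟩
  have hmem : g⁻¹ * h ∈ commutator G := QuotientGroup.leftRel_apply.mp hgh
  have hcomm : Commute g (g⁻¹ * h) := mem_center_iff.mp (hcenter hmem) g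
  rw [← hl.map_mul_of_commute_of_eq_zero hcomm (hzero _ hmem), mul_inv_cancel_left]

end IsLengthFunction

theorem length_function_heisenberg_vanishes_on_center_general {H : Type*} [Group H] (a b c : H)
    (hab : a * b * a⁻¹ * b⁻¹ = c) (hac : a * c = c * a) (hbc : b * c = c * b)
    (hgen : Subgroup.closure ({a, b} : Set H) = ⊤)
    (l : H → ℝ)
    (hpow : ∀ (g : H) (n : ℤ), l (g ^ n) = |(n : ℝ)| * l g)
    (hconj : ∀ x g : H, l (x * g * x⁻¹) = l g)
    (hcomm : ∀ x y : H, x * y = y * x → l (x * y) ≤ l x + l y) :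
    l c = 0 ∧
    ∃ l' : Abelianization H → ℝ, ∀ g : H, l' (Abelianization.of g) = l g := by
  have hl : IsLengthFunction l := ⟨hpow, hconj, hcomm⟩
  have hc : c ∈ center H :=
    mem_center_of_closure_eq_top hgen (by rintro x (rfl | rfl); exacts [hac, hbc])
  have hab_c : Commute (a * b) c := mem_center_iff.mp hc (a * b)
  have hconj_ab : a * (a * b) * a⁻¹ = a * b * c :=
    calc a * (a * b) * a⁻¹ = a * (a * b * a⁻¹ * b⁻¹) * b := by group
      _ = a * b * c := by rw [hab, hac, mul_assoc]; exact hab_c.eq.symm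
  have hlc : l c = 0 := hl.eq_zero_of_conj_eq_mul hconj_ab hab_c hac
  have : (zpowers c).Normal := normal_of_le_center (zpowers_le.mpr hc)
  have hcommutator : commutator H ≤ zpowers c :=
    commutator_le_of_closure_pair_eq_top hgen (hab ▸ mem_zpowers c)
  refine ⟨hlc, hl.exists_factor_abelianization (hcommutator.trans (zpowers_le.mpr hc)) ?_⟩
  intro g hg
  obtain ⟨k, rfl⟩ := hcommutator hg
  rw [hl.map_zpow, hlc, mul_zero]

/-- Any length function on the integral Heisenberg group (generated by `a, b`, with
central commutator `c = ⁅a,b⁆`) vanishes on `c`, and consequently factors through the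
abelianization. -/
theorem length_function_heisenberg_vanishes_on_center {H : Type*} [Group H] (a b c : H)
    (hab : a * b * a⁻¹ * b⁻¹ = c) (hac : a * c = c * a) (hbc : b * c = c * b)
    (hgen : Subgroup.closure ({a, b} : Set H) = ⊤)
    (l : H → ℝ)
    (hnonneg : ∀ g : H, 0 ≤ l g)
    (hpow : ∀ (g : H) (n : ℤ), l (g ^ n) = |(n : ℝ)| * l g)
    (hconj : ∀ x g : H, l (x * g * x⁻¹) = l g)
    (hcomm : ∀ x y : H, x * y = y * x → l (x * y) ≤ l x + l y) :
    l c = 0 ∧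
    ∃ l' : Abelianization H → ℝ, ∀ g : H, l' (Abelianization.of g) = l g :=
  length_function_heisenberg_vanishes_on_center_general a b c hab hac hbc hgen l hpow hconj hcomm
end

section
/- Let f : G → E be a quasi-cocycle: E a normed vector space with an isometric linear G-action, and ‖f(gh) − f(g) − g·f(h)‖ < C for all g, h ∈ G. Then l(g) = lim_{n→∞} ‖f(gⁿ)‖/n exists and defines a length function on G. -/
/-!
For a quasi-cocycle `f`, the function `N g = ‖f g‖` is quasi-subadditive,
`N (g * h) ≤ N g + N h + C`, because `ρ g` is an isometry; and `N g⁻¹ ≤ N g + ‖f 1‖ + C`,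
applying the same estimate to `g * g⁻¹ = 1`. Along the powers of `g`, `n ↦ N (gⁿ) + |C|` is
subadditive, so Fekete's lemma gives the limit `l g` of `N (gⁿ) / n`. Homogeneity in `n ≥ 0`
comes from passing to the subsequence `N (g^(k n))`; inversion, conjugation and products of
commuting elements change `N (·ⁿ)` only by a bounded error, which disappears after dividing by `n`.
-/

open Filter Topology

section Sequences

variable {u v : ℕ → ℝ} {a b : ℝ}

theorem exists_tendsto_div_of_le_add_add_const (h0 : ∀ n, 0 ≤ u n) {C : ℝ}
    (hsub : ∀ m n, u (m + n) ≤ u m + u n + C) :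
    ∃ L, Tendsto (fun n : ℕ => u n / n) atTop (𝓝 L) := by
  have hsub' : Subadditive fun n => u n + |C| := fun m n => by
    linarith [hsub m n, le_abs_self C]
  have hbdd : BddBelow (Set.range fun n : ℕ => (u n + |C|) / n) :=
    ⟨0, by rintro _ ⟨n, rfl⟩; have := h0 n; positivity⟩
  refine ⟨hsub'.lim, ?_⟩
  have h := (hsub'.tendsto_lim hbdd).sub (tendsto_const_div_atTop_nhds_zero_nat |C|)
  rw [sub_zero] at h
  exact h.congr fun n => by ring

theorem le_of_tendsto_div_of_le_add_const (hu : Tendsto (fun n : ℕ => u n / n) atTop (𝓝 a))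
    (hv : Tendsto (fun n : ℕ => v n / n) atTop (𝓝 b)) {D : ℝ} (h : ∀ n, u n ≤ v n + D) :
    a ≤ b := by
  have hv' := hv.add (tendsto_const_div_atTop_nhds_zero_nat D)
  rw [add_zero] at hv'
  refine le_of_tendsto_of_tendsto' hu hv' fun n => ?_
  rw [← add_div]
  gcongr
  exact h n

theorem tendsto_comp_mul_div (hu : Tendsto (fun n : ℕ => u n / n) atTop (𝓝 a)) (k : ℕ) :
    Tendsto (fun n : ℕ => u (k * n) / n) atTop (𝓝 (k * a)) := by
  rcases Nat.eq_zero_or_pos k with rfl | hk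
  · simpa using tendsto_const_div_atTop_nhds_zero_nat (u 0)
  · have hk_mul : Tendsto (fun n : ℕ => k * n) atTop atTop :=
      tendsto_id.const_mul_atTop' hk
    refine ((hu.comp hk_mul).const_mul (k : ℝ)).congr fun n => ?_
    rcases Nat.eq_zero_or_pos n with rfl | hn
    · simp
    · simp only [Function.comp_apply, Nat.cast_mul]
      field_simp

end Sequences

section StableNorm

variable {G : Type*} [Group G] {N : G → ℝ} {C : ℝ}

/-- Meaningful only where the limit exists: otherwise `limUnder` returns a junk value. -/
noncomputable def stableNorm (N : G → ℝ) (g : G) : ℝ :=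
  limUnder atTop fun n : ℕ => N (g ^ n) / n

theorem tendsto_stableNorm (h0 : ∀ g, 0 ≤ N g) (hmul : ∀ g h, N (g * h) ≤ N g + N h + C)
    (g : G) : Tendsto (fun n : ℕ => N (g ^ n) / n) atTop (𝓝 (stableNorm N g)) :=
  tendsto_nhds_limUnder <| exists_tendsto_div_of_le_add_add_const (fun n => h0 _)
    fun m n => by simpa only [pow_add] using hmul (g ^ m) (g ^ n)

theorem stableNorm_nonneg (h0 : ∀ g, 0 ≤ N g) (hmul : ∀ g h, N (g * h) ≤ N g + N h + C)
    (g : G) : 0 ≤ stableNorm N g :=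
  ge_of_tendsto' (tendsto_stableNorm h0 hmul g) fun n => div_nonneg (h0 _) n.cast_nonneg

theorem stableNorm_pow (h0 : ∀ g, 0 ≤ N g) (hmul : ∀ g h, N (g * h) ≤ N g + N h + C)
    (g : G) (k : ℕ) : stableNorm N (g ^ k) = k * stableNorm N g :=
  tendsto_nhds_unique (tendsto_stableNorm h0 hmul (g ^ k)) <| by
    simpa only [← pow_mul] using tendsto_comp_mul_div (tendsto_stableNorm h0 hmul g) k

theorem stableNorm_inv (h0 : ∀ g, 0 ≤ N g) (hmul : ∀ g h, N (g * h) ≤ N g + N h + C)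
    {D : ℝ} (hinv : ∀ g, N g⁻¹ ≤ N g + D) (g : G) : stableNorm N g⁻¹ = stableNorm N g := by
  have hle : ∀ g : G, stableNorm N g⁻¹ ≤ stableNorm N g := fun g =>
    le_of_tendsto_div_of_le_add_const (tendsto_stableNorm h0 hmul g⁻¹)
      (tendsto_stableNorm h0 hmul g) fun n => by rw [inv_pow]; exact hinv _
  exact le_antisymm (hle g) (by simpa only [inv_inv] using hle g⁻¹)

theorem stableNorm_zpow (h0 : ∀ g, 0 ≤ N g) (hmul : ∀ g h, N (g * h) ≤ N g + N h + C)
    {D : ℝ} (hinv : ∀ g, N g⁻¹ ≤ N g + D) (g : G) (n : ℤ) :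
    stableNorm N (g ^ n) = |(n : ℝ)| * stableNorm N g := by
  rcases n with k | k
  · rw [Int.ofNat_eq_natCast, zpow_natCast, stableNorm_pow h0 hmul, Int.cast_natCast,
      Nat.abs_cast]
  · rw [zpow_negSucc, stableNorm_inv h0 hmul hinv, stableNorm_pow h0 hmul, Int.cast_negSucc,
      abs_neg, Nat.abs_cast]

theorem stableNorm_conj (h0 : ∀ g, 0 ≤ N g) (hmul : ∀ g h, N (g * h) ≤ N g + N h + C)
    (h g : G) : stableNorm N (h * g * h⁻¹) = stableNorm N g := by
  have hle : ∀ h g : G, stableNorm N (h * g * h⁻¹) ≤ stableNorm N g := fun h g =>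
    le_of_tendsto_div_of_le_add_const (tendsto_stableNorm h0 hmul _)
      (tendsto_stableNorm h0 hmul g) (D := N h + N h⁻¹ + 2 * C) fun n => by
        rw [conj_pow, mul_assoc]
        linarith [hmul h (g ^ n * h⁻¹), hmul (g ^ n) h⁻¹]
  refine le_antisymm (hle h g) ?_
  simpa only [inv_inv, mul_assoc, inv_mul_cancel_left, inv_mul_cancel, mul_one]
    using hle h⁻¹ (h * g * h⁻¹)

theorem stableNorm_mul_le_of_commute (h0 : ∀ g, 0 ≤ N g)
    (hmul : ∀ g h, N (g * h) ≤ N g + N h + C) {a b : G} (hab : Commute a b) :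
    stableNorm N (a * b) ≤ stableNorm N a + stableNorm N b :=
  le_of_tendsto_div_of_le_add_const (tendsto_stableNorm h0 hmul (a * b))
    (((tendsto_stableNorm h0 hmul a).add (tendsto_stableNorm h0 hmul b)).congr fun n =>
      (add_div _ _ _).symm)
    fun n => by rw [hab.mul_pow]; exact hmul _ _

end StableNorm

section QuasiCocycle

variable {G E : Type*} [Group G] [NormedAddCommGroup E] [NormedSpace ℝ E]
  {ρ : G →* (E ≃ₗᵢ[ℝ] E)} {f : G → E} {C : ℝ}

theorem norm_map_mul_le_of_quasiCocycle (hqc : ∀ g h, ‖f (g * h) - f g - ρ g (f h)‖ ≤ C)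
    (g h : G) : ‖f (g * h)‖ ≤ ‖f g‖ + ‖f h‖ + C :=
  calc ‖f (g * h)‖ = ‖(f (g * h) - f g - ρ g (f h)) + f g + ρ g (f h)‖ := by
        congr 1; abel
    _ ≤ ‖f (g * h) - f g - ρ g (f h)‖ + ‖f g‖ + ‖ρ g (f h)‖ := norm_add₃_le
    _ ≤ ‖f g‖ + ‖f h‖ + C := by rw [LinearIsometryEquiv.norm_map]; linarith [hqc g h]

theorem norm_map_inv_le_of_quasiCocycle (hqc : ∀ g h, ‖f (g * h) - f g - ρ g (f h)‖ ≤ C)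
    (g : G) : ‖f g⁻¹‖ ≤ ‖f g‖ + (‖f 1‖ + C) := by
  have h := hqc g g⁻¹
  rw [mul_inv_cancel] at h
  calc ‖f g⁻¹‖ = ‖ρ g (f g⁻¹)‖ := (LinearIsometryEquiv.norm_map _ _).symm
    _ = ‖f 1 - f g - (f 1 - f g - ρ g (f g⁻¹))‖ := by rw [sub_sub_cancel]
    _ ≤ ‖f 1‖ + ‖f g‖ + ‖f 1 - f g - ρ g (f g⁻¹)‖ := (norm_sub_le _ _).trans
        (by gcongr; exact norm_sub_le _ _)
    _ ≤ ‖f g‖ + (‖f 1‖ + C) := by linarith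

end QuasiCocycle

theorem quasi_cocycle_average_norm_is_length_function_general {G E : Type*} [Group G]
    [NormedAddCommGroup E] [NormedSpace ℝ E]
    (ρ : G →* (E ≃ₗᵢ[ℝ] E)) (f : G → E) (C : ℝ)
    (hqc : ∀ g h : G, ‖f (g * h) - f g - ρ g (f h)‖ < C) :
    ∃ l : G → ℝ,
      (∀ g : G, Filter.Tendsto (fun n : ℕ => ‖f (g ^ n)‖ / n)
        Filter.atTop (nhds (l g))) ∧
      (∀ g : G, 0 ≤ l g) ∧
      (∀ (g : G) (n : ℤ), l (g ^ n) = |(n : ℝ)| * l g) ∧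
      (∀ h g : G, l (h * g * h⁻¹) = l g) ∧
      (∀ a b : G, a * b = b * a → l (a * b) ≤ l a + l b) := by
  have hqc' : ∀ g h : G, ‖f (g * h) - f g - ρ g (f h)‖ ≤ C := fun g h => (hqc g h).le
  have h0 : ∀ g, 0 ≤ ‖f g‖ := fun g => norm_nonneg _
  have hmul := norm_map_mul_le_of_quasiCocycle hqc'
  have hinv := norm_map_inv_le_of_quasiCocycle hqc'
  exact ⟨stableNorm (‖f ·‖), tendsto_stableNorm h0 hmul, stableNorm_nonneg h0 hmul,
    stableNorm_zpow h0 hmul hinv, stableNorm_conj h0 hmul,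
    fun a b hab => stableNorm_mul_le_of_commute h0 hmul hab⟩

/-- The average norm of a quasi-cocycle is a length function: if `f : G → E` satisfies
`‖f (g*h) - f g - g • f h‖ < C` for an isometric linear `G`-action `ρ` on a normed
space `E`, then `l g = lim_n ‖f (gⁿ)‖ / n` exists and is a length function. -/
theorem quasi_cocycle_average_norm_is_length_function {G E : Type*} [Group G]
    [NormedAddCommGroup E] [NormedSpace ℝ E]
    (ρ : G →* (E ≃ₗᵢ[ℝ] E)) (f : G → E) (C : ℝ) (hC : 0 < C)
    (hqc : ∀ g h : G, ‖f (g * h) - f g - ρ g (f h)‖ < C) :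
    ∃ l : G → ℝ,
      (∀ g : G, Filter.Tendsto (fun n : ℕ => ‖f (g ^ n)‖ / n)
        Filter.atTop (nhds (l g))) ∧
      (∀ g : G, 0 ≤ l g) ∧
      (∀ (g : G) (n : ℤ), l (g ^ n) = |(n : ℝ)| * l g) ∧
      (∀ h g : G, l (h * g * h⁻¹) = l g) ∧
      (∀ a b : G, a * b = b * a → l (a * b) ≤ l a + l b) :=
  quasi_cocycle_average_norm_is_length_function_general ρ f C hqc
end

section
/- Let V be a finite-dimensional vector space over a field K and A : V → V a nilpotent linear map. Then V has a basis of the form {a₁, Aa₁, ..., A^{k₁−1}a₁, ..., a_s, Aa_s, ..., A^{k_s−1}a_s} with A^{k_i}a_i = 0 for each i; equivalently, I + A is conjugate to a direct sum of Jordan blocks with 1s on the diagonal. -/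
/-!
Through `A`, the space `V` becomes a finitely generated `K[X]`-module on which `X` acts
nilpotently, i.e. an `X`-primary torsion module. The structure theorem over the PID `K[X]`
splits it as `⨁ i, K[X] ⧸ (X ^ kᵢ)`. In each summand the classes of `1, X, …, X ^ (kᵢ - 1)`
form a `K`-basis and `X ^ kᵢ` kills the class of `1`, so pulling back `aᵢ := [1]` along the
isomorphism gives the chains `aᵢ, A aᵢ, …, A ^ (kᵢ - 1) aᵢ`.
-/

open Polynomial Module
open scoped DirectSum

/-- `AdjoinRoot (X ^ k)` is by definition this quotient, with the same `R`-module structure. -/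
noncomputable def Polynomial.quotSpanXPowBasis (R : Type*) [CommRing R] [Nontrivial R] (k : ℕ) :
    Basis (Fin k) R (R[X] ⧸ R[X] ∙ (X ^ k : R[X])) :=
  (AdjoinRoot.powerBasis' (monic_X_pow k)).basis.reindex (finCongr (natDegree_X_pow k))

theorem Polynomial.quotSpanXPowBasis_apply (R : Type*) [CommRing R] [Nontrivial R] (k : ℕ)
    (j : Fin k) : quotSpanXPowBasis R k j = Submodule.Quotient.mk (X ^ (j : ℕ)) := by
  unfold quotSpanXPowBasis
  erw [Basis.reindex_apply, PowerBasis.basis_eq_pow, AdjoinRoot.powerBasis'_gen]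
  rfl

theorem DFinsupp.basis_apply {ι R : Type*} [DecidableEq ι] [Semiring R] {M : ι → Type*}
    [∀ i, AddCommMonoid (M i)] [∀ i, Module R (M i)] {η : ι → Type*}
    (b : ∀ i, Basis (η i) R (M i)) (i : ι) (j : η i) :
    DFinsupp.basis b ⟨i, j⟩ = DFinsupp.single i (b i j) := by
  rw [Basis.apply_eq_iff]
  simp [DFinsupp.basis, Equiv.symm_apply_eq]

namespace Module.AEval'

variable {R M : Type*} [CommRing R] [AddCommGroup M] [Module R M] {φ : M →ₗ[R] M}

theorem isTorsion'_powers_X_of_isNilpotent (hφ : IsNilpotent φ) :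
    IsTorsion' (AEval' φ) (Submonoid.powers (X : R[X])) := by
  obtain ⟨n, hn⟩ := hφ
  refine (Submodule.isTorsion'_powers_iff _).mpr fun m => ⟨n, ?_⟩
  rw [← (of φ).apply_symm_apply m, X_pow_smul_of, hn, zero_smul, map_zero]

theorem exists_basis_eq_pow_apply_of_linearEquiv [Nontrivial R] {ι : Type*} [DecidableEq ι]
    {k : ι → ℕ} (e : AEval' φ ≃ₗ[R[X]] ⨁ i, R[X] ⧸ R[X] ∙ (X ^ k i : R[X])) :
    ∃ (a : ι → M) (B : Basis ((i : ι) × Fin (k i)) R M),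
      (∀ i, (φ ^ k i) (a i) = 0) ∧ ∀ i (j : Fin (k i)), B ⟨i, j⟩ = (φ ^ (j : ℕ)) (a i) := by
  let f : M ≃ₗ[R] ⨁ i, R[X] ⧸ R[X] ∙ (X ^ k i : R[X]) := (of φ).trans (e.restrictScalars R)
  have hf (n : ℕ) (m : M) : f ((φ ^ n) m) = (X ^ n : R[X]) • f m := by
    simp only [f, LinearEquiv.trans_apply, LinearEquiv.restrictScalars_apply, ← map_smul,
      X_pow_smul_of]
    rfl
  let a i := f.symm (DirectSum.lof R[X] ι _ i (Submodule.Quotient.mk 1))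
  have ha (i : ι) (n : ℕ) :
      (φ ^ n) (a i) = f.symm (DirectSum.lof R[X] ι _ i (Submodule.Quotient.mk (X ^ n))) := by
    rw [f.eq_symm_apply, hf, f.apply_symm_apply, ← map_smul, ← Submodule.Quotient.mk_smul,
      smul_eq_mul, mul_one]
  refine ⟨a, (DFinsupp.basis fun i => quotSpanXPowBasis R (k i)).map f.symm, fun i => ?_,
    fun i j => ?_⟩
  · rw [ha, (Submodule.Quotient.mk_eq_zero _).mpr (Submodule.mem_span_singleton_self _),
      map_zero, map_zero]
  · rw [Basis.map_apply, DFinsupp.basis_apply, quotSpanXPowBasis_apply, ha]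
    rfl

end Module.AEval'

/-- Jordan normal form for nilpotent operators: if `A : V → V` is nilpotent on a
finite-dimensional vector space `V`, then `V` has a basis of the form
`{a₁, Aa₁, …, A^{k₁−1}a₁, …, a_s, …, A^{k_s−1}a_s}` with `A^{k_i} a_i = 0`. -/
theorem nilpotent_jordan_basis {K V : Type*} [Field K] [AddCommGroup V] [Module K V]
    [FiniteDimensional K V] (A : V →ₗ[K] V) (hA : IsNilpotent A) :
    ∃ (s : ℕ) (k : Fin s → ℕ) (a : Fin s → V)
      (B : Module.Basis ((i : Fin s) × Fin (k i)) K V),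
      (∀ i : Fin s, (A ^ (k i)) (a i) = 0) ∧
      (∀ (i : Fin s) (j : Fin (k i)), B ⟨i, j⟩ = (A ^ (j : ℕ)) (a i)) := by
  obtain ⟨s, k, ⟨e⟩⟩ := torsion_by_prime_power_decomposition irreducible_X
    (AEval'.isTorsion'_powers_X_of_isNilpotent hA)
  obtain ⟨a, B, hker, hB⟩ := AEval'.exists_basis_eq_pow_apply_of_linearEquiv e
  exact ⟨s, k, a, B, hker, hB⟩
end

section
/- Let l be a length function on SL_n(ℝ) (n ≥ 2). Then l vanishes on every unipotent element of SL_n(ℝ). -/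
/-!
Write `u = 1 + N` with `N` nilpotent, so that `u ^ 2 = 1 + N (N + 2)`. As `N + 2` is coprime to
`X`, substituting `X ↦ X (X + 2)` is injective on every truncated polynomial ring
`K[X] ⧸ (X ^ m)`. Decomposing `Kⁿ`, viewed as a `K[X]`-module through `N`, into such cyclic pieces
turns this substitution into an invertible `P` with `P u = u ^ 2 P`. Then `P ^ 2`, rescaled into
`SL_n(ℝ)` using its positive determinant, conjugates `u` to `u ^ 4`, whence
`l u = l (u ^ 4) = 4 l u`.
-/

open Polynomial DirectSum

namespace Polynomial

section CommRing

variable {R : Type*} [CommRing R]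

theorem X_pow_dvd_comp_X_mul {r p : R[X]} {m : ℕ} (h : X ^ m ∣ p) : X ^ m ∣ p.comp (X * r) := by
  obtain ⟨s, rfl⟩ := h
  exact ⟨r ^ m * s.comp (X * r), by rw [mul_comp, X_pow_comp]; ring⟩

theorem span_X_pow_le_comap_aeval_X_mul (r : R[X]) (m : ℕ) :
    Ideal.span {(X : R[X]) ^ m} ≤ Ideal.comap (aeval (X * r)) (Ideal.span {X ^ m}) :=
  fun p hp => by
    simp only [Ideal.mem_comap, Ideal.mem_span_singleton, ← comp_eq_aeval] at hp ⊢
    exact X_pow_dvd_comp_X_mul hp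

noncomputable def quotientSpanXPowCompXMul (r : R[X]) (m : ℕ) :
    R[X] ⧸ Ideal.span {(X : R[X]) ^ m} →ₐ[R] R[X] ⧸ Ideal.span {(X : R[X]) ^ m} :=
  Ideal.quotientMapₐ _ (aeval (X * r)) (span_X_pow_le_comap_aeval_X_mul r m)

theorem quotientSpanXPowCompXMul_smul (r : R[X]) (m : ℕ) (p : R[X])
    (w : R[X] ⧸ Ideal.span {(X : R[X]) ^ m}) :
    quotientSpanXPowCompXMul r m (p • w) = p.comp (X * r) • quotientSpanXPowCompXMul r m w := by
  obtain ⟨w, rfl⟩ := Ideal.Quotient.mk_surjective w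
  change quotientSpanXPowCompXMul r m (Ideal.Quotient.mk _ (p * w)) =
    Ideal.Quotient.mk _ (p.comp (X * r) * w.comp (X * r))
  simp [quotientSpanXPowCompXMul, comp_eq_aeval]

end CommRing

section IsDomain

variable {R : Type*} [CommRing R] [IsDomain R]

theorem X_pow_dvd_of_X_pow_dvd_comp_X_mul {r p : R[X]} (hr : IsCoprime X r) {m : ℕ}
    (h : X ^ m ∣ p.comp (X * r)) : X ^ m ∣ p := by
  induction m generalizing p with
  | zero => simp
  | succ m ih =>
    obtain ⟨p, rfl⟩ : X ∣ p := by
      have : X ∣ p.comp (X * r) := (dvd_pow_self X m.succ_ne_zero).trans h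
      simpa [X_dvd_iff, coeff_zero_eq_eval_zero, eval_comp] using this
    rw [mul_comp, X_comp, pow_succ', mul_assoc, mul_dvd_mul_iff_left X_ne_zero] at h
    rw [pow_succ']
    exact mul_dvd_mul_left X (ih (hr.pow_left.dvd_of_dvd_mul_left h))

theorem quotientSpanXPowCompXMul_injective {r : R[X]} (hr : IsCoprime X r) (m : ℕ) :
    Function.Injective (quotientSpanXPowCompXMul r m) :=
  Ideal.quotientMap_injective' (H := span_X_pow_le_comap_aeval_X_mul r m) fun p hp => by
    simp only [Ideal.mem_comap, Ideal.mem_span_singleton] at hp ⊢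
    exact X_pow_dvd_of_X_pow_dvd_comp_X_mul hr hp

end IsDomain

end Polynomial

section Conjugacy

variable {K : Type*} [Field K]

theorem DirectSum.exists_injective_linearMap_X_smul_eq {ι : Type*} [DecidableEq ι] (k : ι → ℕ)
    {r : K[X]} (hr : IsCoprime X r) :
    ∃ Φ : (⨁ i, K[X] ⧸ K[X] ∙ (X : K[X]) ^ k i) →ₗ[K] ⨁ i, K[X] ⧸ K[X] ∙ (X : K[X]) ^ k i,
      Function.Injective Φ ∧ ∀ w, Φ ((X : K[X]) • w) = (X * r) • Φ w := by
  refine ⟨DFinsupp.mapRange.linearMap fun i => (quotientSpanXPowCompXMul r (k i)).toLinearMap,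
    (DFinsupp.mapRange_injective _ fun i => map_zero _).2
      fun i => quotientSpanXPowCompXMul_injective hr (k i),
    fun w => DFinsupp.ext fun i => ?_⟩
  have hXi := quotientSpanXPowCompXMul_smul r (k i) X (w i)
  rw [X_comp] at hXi
  exact hXi

variable {V : Type*} [AddCommGroup V] [Module K V]

theorem Module.End.isTorsion'_powers_X_of_isNilpotent {T : Module.End K V} (hT : IsNilpotent T) :
    Module.IsTorsion' (Module.AEval' T) (Submonoid.powers (X : K[X])) :=
  (Submodule.isTorsion'_powers_iff X).2 fun x => by
    obtain ⟨k, hk⟩ := hT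
    obtain ⟨v, rfl⟩ := (Module.AEval'.of T).surjective x
    exact ⟨k, by rw [Module.AEval'.X_pow_smul_of, hk, zero_smul, map_zero]⟩

theorem Module.End.exists_isUnit_mul_eq_aeval_X_mul_mul [FiniteDimensional K V]
    {T : Module.End K V} (hT : IsNilpotent T) {r : K[X]} (hr : IsCoprime X r) :
    ∃ E : Module.End K V, IsUnit E ∧ E * T = aeval T (X * r) * E := by
  classical
  obtain ⟨d, k, ⟨e⟩⟩ := Module.torsion_by_prime_power_decomposition irreducible_X
    (isTorsion'_powers_X_of_isNilpotent hT)
  obtain ⟨Φ, hΦ, hΦX⟩ := DirectSum.exists_injective_linearMap_X_smul_eq k hr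
  let ρ := Module.AEval'.of T
  let F : Module.End K V := ρ.symm.toLinearMap ∘ₗ (e.symm.restrictScalars K).toLinearMap ∘ₗ Φ ∘ₗ
    (e.restrictScalars K).toLinearMap ∘ₗ ρ.toLinearMap
  have hF : Function.Injective F :=
    ρ.symm.injective.comp (e.symm.injective.comp (hΦ.comp (e.injective.comp ρ.injective)))
  refine ⟨F, (LinearMap.isUnit_iff_ker_eq_bot F).2 (LinearMap.ker_eq_bot.2 hF),
    LinearMap.ext fun v => ?_⟩
  simp [F, ρ, ← Module.AEval'.X_smul_of, hΦX]

theorem Matrix.exists_isUnit_semiconjBy_sq_of_isNilpotent_sub_one {ι : Type*} [Fintype ι]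
    [DecidableEq ι] (h2 : (2 : K) ≠ 0) {U : Matrix ι ι K} (hU : IsNilpotent (U - 1)) :
    ∃ P : Matrix ι ι K, IsUnit P ∧ SemiconjBy P U (U ^ 2) := by
  let φ : Matrix ι ι K ≃ₐ[K] Module.End K (ι → K) := Matrix.toLinAlgEquiv'
  have hr : IsCoprime (X : K[X]) (X + 2) := by
    simpa [C_ofNat] using
      isCoprime_X_sub_C_of_isUnit_sub (a := (0 : K)) (b := -2) (by simpa using h2.isUnit)
  obtain ⟨E, hE, hEU⟩ := Module.End.exists_isUnit_mul_eq_aeval_X_mul_mul (hU.map φ) hr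
  have hq : aeval (U - 1) (X * (X + 2) : K[X]) = U ^ 2 - 1 := by
    simp only [map_mul, map_add, aeval_X, map_ofNat]
    noncomm_ring
  have hPU := congrArg φ.symm hEU
  rw [aeval_algEquiv, AlgHom.comp_apply, hq, map_mul, map_mul, AlgEquiv.symm_apply_apply,
    AlgEquiv.coe_toAlgHom, AlgEquiv.symm_apply_apply, mul_sub, sub_mul, mul_one, one_mul,
    sub_left_inj] at hPU
  exact ⟨φ.symm E, hE.map φ.symm, hPU⟩

end Conjugacy

namespace Matrix.SpecialLinearGroup

variable {ι : Type*} [Fintype ι] [DecidableEq ι]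

theorem exists_coe_eq_smul_of_det_pos {M : Matrix ι ι ℝ} (hM : 0 < M.det) :
    ∃ (c : ℝ) (g : SpecialLinearGroup ι ℝ), (g : Matrix ι ι ℝ) = c • M := by
  rcases isEmpty_or_nonempty ι with hι | hι
  · exact ⟨1, ⟨M, M.det_isEmpty⟩, (one_smul ℝ M).symm⟩
  · set c := M.det ^ (-(Fintype.card ι : ℝ)⁻¹)
    have hc : (c • M).det = 1 := by
      rw [Matrix.det_smul, ← Real.rpow_natCast, ← Real.rpow_mul hM.le, neg_mul,
        inv_mul_cancel₀ (by positivity), Real.rpow_neg_one, inv_mul_cancel₀ hM.ne']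
    exact ⟨c, ⟨c • M, hc⟩, rfl⟩

theorem isConj_of_semiconjBy {u v : SpecialLinearGroup ι ℝ} {M : Matrix ι ι ℝ}
    (hM : 0 < M.det) (h : SemiconjBy M u v) : IsConj u v := by
  obtain ⟨c, g, hg⟩ := exists_coe_eq_smul_of_det_pos hM
  refine isConj_iff.2 ⟨g, mul_inv_eq_of_eq_mul (Subtype.ext ?_)⟩
  simp only [coe_mul, hg, Matrix.smul_mul, Matrix.mul_smul, h.eq]

end Matrix.SpecialLinearGroup

theorem eq_zero_of_isConj_pow {G : Type*} [Group G] {l : G → ℝ}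
    (hpow : ∀ (g : G) (k : ℤ), l (g ^ k) = |(k : ℝ)| * l g)
    (hconj : ∀ a g : G, l (a * g * a⁻¹) = l g) {u : G} {k : ℕ} (hk : k ≠ 1)
    (h : IsConj u (u ^ k)) : l u = 0 := by
  obtain ⟨c, hc⟩ := isConj_iff.1 h
  have hk' : (k : ℝ) - 1 ≠ 0 := sub_ne_zero.2 (by exact_mod_cast hk)
  have hlu := hpow u k
  rw [zpow_natCast, ← hc, hconj, Int.cast_natCast, Nat.abs_cast] at hlu
  exact (mul_eq_zero.1 (by linarith : ((k : ℝ) - 1) * l u = 0)).resolve_left hk'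

theorem length_function_SL_vanishes_on_unipotent_general {n : ℕ}
    (l : Matrix.SpecialLinearGroup (Fin n) ℝ → ℝ)
    (hpow : ∀ (g : Matrix.SpecialLinearGroup (Fin n) ℝ) (k : ℤ),
      l (g ^ k) = |(k : ℝ)| * l g)
    (hconj : ∀ a g : Matrix.SpecialLinearGroup (Fin n) ℝ, l (a * g * a⁻¹) = l g)
    (u : Matrix.SpecialLinearGroup (Fin n) ℝ)
    (hu : IsNilpotent ((u : Matrix (Fin n) (Fin n) ℝ) - 1)) :
    l u = 0 := by
  obtain ⟨P, hP, hPu⟩ :=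
    Matrix.exists_isUnit_semiconjBy_sq_of_isNilpotent_sub_one two_ne_zero hu
  have hP4 : SemiconjBy (P * P) u ((u : Matrix (Fin n) (Fin n) ℝ) ^ 4) := by
    simpa only [← pow_mul] using (hPu.pow_right 2).mul_left hPu
  have hdet : 0 < (P * P).det := by
    rw [Matrix.det_mul]
    exact mul_self_pos.2 (P.isUnit_iff_isUnit_det.1 hP).ne_zero
  refine eq_zero_of_isConj_pow hpow hconj (by norm_num : 4 ≠ 1) ?_
  exact Matrix.SpecialLinearGroup.isConj_of_semiconjBy hdet (by simpa using hP4)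

/-- Any length function on `SL_n(ℝ)` (`n ≥ 2`) vanishes on unipotent elements. -/
theorem length_function_SL_vanishes_on_unipotent {n : ℕ} (hn : 2 ≤ n)
    (l : Matrix.SpecialLinearGroup (Fin n) ℝ → ℝ)
    (hnonneg : ∀ g, 0 ≤ l g)
    (hpow : ∀ (g : Matrix.SpecialLinearGroup (Fin n) ℝ) (k : ℤ),
      l (g ^ k) = |(k : ℝ)| * l g)
    (hconj : ∀ a g : Matrix.SpecialLinearGroup (Fin n) ℝ, l (a * g * a⁻¹) = l g)
    (hcomm : ∀ a b : Matrix.SpecialLinearGroup (Fin n) ℝ,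
      a * b = b * a → l (a * b) ≤ l a + l b)
    (u : Matrix.SpecialLinearGroup (Fin n) ℝ)
    (hu : IsNilpotent ((u : Matrix (Fin n) (Fin n) ℝ) - 1)) :
    l u = 0 :=
  length_function_SL_vanishes_on_unipotent_general l hpow hconj u hu
end
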